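/- Let E be a centrally orthocomplete generalized pseudoeffect algebra and e,f ∈ E. Then: (i) γ_0 = 0; (ii) γ_e e = e; (iii) e ≤ f implies γ_e ≤ γ_f; (iv) if e⊕f exists then γ_{e⊕f} = γ_e ∨ γ_f; (v) γ_{γ_e f} = γ_e ∘ γ_f = γ_e ∧ γ_f; (vi) γ_{(γ_e)′f} = (γ_e)′ ∘ γ_f = (γ_e)′ ∧ γ_f, where meets, joins and complements are computed in the boolean algebra ΓEX(E). -/
import Mathlib


/- Common framework: generalized pseudoeffect algebras (GPEAs), after
   Foulis, Pulmannová, Vinceková, "The exocenter and type decompositions for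
   generalized pseudoeffect algebras".
   A partial binary operation ⊕ is represented by its graph
   `R : E → E → E → Prop`, where `R a b s` means "a ⊕ b is defined and equals s". -/

universe u v

namespace GPEApaper

/-- Raw data of a partial algebra: the graph of a partial binary operation
together with a zero element. -/
structure PartialAlg (E : Type u) where
  R : E → E → E → Prop
  zero : E

namespace PartialAlg

variable {E : Type u} (A : PartialAlg E)

/-- The axioms (GPEA1)–(GPEA5) of a generalized pseudoeffect algebra,
including the functionality (well-definedness) of the partial operation. -/
def IsGPEA : Prop :=
  -- ⊕ is a partial operation (single-valued)
  (∀ a b c d : E, A.R a b c → A.R a b d → c = d) ∧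
  -- (GPEA1) associativity, both directions
  (∀ a b c ab abc : E, A.R a b ab → A.R ab c abc → ∃ bc, A.R b c bc ∧ A.R a bc abc) ∧
  (∀ a b c bc abc : E, A.R b c bc → A.R a bc abc → ∃ ab, A.R a b ab ∧ A.R ab c abc) ∧
  -- (GPEA2) conjugacy
  (∀ a b s : E, A.R a b s → (∃ d, A.R d a s) ∧ (∃ e, A.R b e s)) ∧
  -- (GPEA3) cancellation
  (∀ a b c s : E, A.R a b s → A.R a c s → b = c) ∧
  (∀ a b c s : E, A.R b a s → A.R c a s → b = c) ∧
  -- (GPEA4) positivity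
  (∀ a b : E, A.R a b A.zero → a = A.zero ∧ b = A.zero) ∧
  -- (GPEA5) zero element
  (∀ a : E, A.R a A.zero a ∧ A.R A.zero a a)

/-- a ⊕ b is defined. -/
def Defined (a b : E) : Prop := ∃ s, A.R a b s

/-- The induced partial order: a ≤ b iff a ⊕ x = b for some x. -/
def le (a b : E) : Prop := ∃ x, A.R a x b

/-- Orthogonality: p ⊥ q iff p ⊕ q and q ⊕ p both exist and are equal. -/
def perp (a b : E) : Prop := ∃ s, A.R a b s ∧ A.R b a s

/-- b is an upper bound of the set S. -/
def IsUB (S : Set E) (b : E) : Prop := ∀ a ∈ S, A.le a b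

/-- s is the supremum (least upper bound) of the set S in (E, ≤). -/
def IsSup (S : Set E) (s : E) : Prop := A.IsUB S s ∧ ∀ b, A.IsUB S b → A.le s b

/-- s is the infimum (greatest lower bound) of the set S in (E, ≤). -/
def IsInf (S : Set E) (s : E) : Prop :=
  (∀ a ∈ S, A.le s a) ∧ ∀ b, (∀ a ∈ S, A.le b a) → A.le b s

/-- An ideal of a GPEA. -/
def IsIdeal (I : Set E) : Prop :=
  I.Nonempty ∧ (∀ a ∈ I, ∀ b, A.le b a → b ∈ I) ∧
    ∀ a ∈ I, ∀ b ∈ I, ∀ s, A.R a b s → s ∈ I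

/-- E = S ⊕ S′ : S and S′ are ideals, elements of S are orthogonal to elements
of S′, and every element of E has a unique decomposition a = a₁ ⊕ a₂ with
a₁ ∈ S, a₂ ∈ S′. -/
def IsDirectSum (S S' : Set E) : Prop :=
  A.IsIdeal S ∧ A.IsIdeal S' ∧ (∀ a ∈ S, ∀ b ∈ S', A.perp a b) ∧
    ∀ a : E, ∃! p : E × E, p.1 ∈ S ∧ p.2 ∈ S' ∧ A.R p.1 p.2 a

/-- A central ideal (direct summand). -/
def IsCentralIdeal (S : Set E) : Prop := ∃ S', A.IsDirectSum S S'

/-- A normal ideal. -/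
def IsNormalIdeal (I : Set E) : Prop :=
  A.IsIdeal I ∧ ∀ a x y s : E, A.R a x s → A.R y a s → (x ∈ I ↔ y ∈ I)

/-- The axioms (EXC1)–(EXC4): π belongs to the exocenter ΓEX(E). -/
def IsExo (π : E → E) : Prop :=
  (∀ e f s, A.R e f s → A.R (π e) (π f) (π s)) ∧
  (∀ e, π (π e) = π e) ∧
  (∀ e, A.le (π e) e) ∧
  (∀ e f, π e = e → π f = A.zero → A.perp e f)

/-- For a ≤ b, `A.rdiv a b` is the element a/b, i.e. the unique x with
a ⊕ x = b (chosen by Hilbert choice when it exists). -/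
noncomputable def rdiv (a b : E) : E :=
  letI : Nonempty E := ⟨A.zero⟩
  Classical.epsilon fun x => A.R a x b

/-- For π in the exocenter, π′ e := (π e)/e. -/
noncomputable def exoCompl (π : E → E) : E → E := fun e => A.rdiv (π e) e

/-- The order on the exocenter: ξ ≤ π iff ξ = ξ ∘ π. -/
def exoLe (_A : PartialAlg E) (ξ π : E → E) : Prop := ξ = ξ ∘ π

/-- Disjointness in the boolean algebra ΓEX(E): the meet (= composition)
of ξ and π is the zero map. -/
def exoDisjoint (ξ π : E → E) : Prop := ∀ e, ξ (π e) = A.zero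

/-- The join in the boolean algebra ΓEX(E): π ∨ ξ = (π′ ∘ ξ′)′. -/
noncomputable def exoSup (π ξ : E → E) : E → E :=
  A.exoCompl (A.exoCompl π ∘ A.exoCompl ξ)

/-- σ is the least upper bound of a set S of exocenter elements,
with respect to the order of the boolean algebra ΓEX(E). -/
def IsExoLUB (S : Set (E → E)) (σ : E → E) : Prop :=
  A.IsExo σ ∧ (∀ π ∈ S, A.exoLe π σ) ∧
    ∀ β, A.IsExo β → (∀ π ∈ S, A.exoLe π β) → A.exoLe σ β

/-- A central element (C1)–(C4). -/
def Central (c : E) : Prop :=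
  (∀ a : E, ∃ a₁ a₂, A.le a₁ c ∧ A.Defined a₂ c ∧ A.R a₁ a₂ a) ∧
  (∀ a b : E, A.le a c → A.Defined b c → A.perp a b) ∧
  (∀ a b s : E, A.le a c → A.le b c → A.R a b s → A.le s c) ∧
  (∀ a b ab : E, A.Defined a c → A.Defined b c → A.R a b ab → A.Defined ab c)

/-- `A.ListSumsTo [e₁, …, eₙ] s` : the orthosum e₁ ⊕ (e₂ ⊕ (⋯ ⊕ eₙ)) is
defined and equals s (empty orthosum is 0). -/
def ListSumsTo (A : PartialAlg E) : List E → E → Prop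
  | [], s => s = A.zero
  | a :: l, s => ∃ t, A.ListSumsTo l t ∧ A.R a t s

/-- The finite subfamily indexed by F is orthogonal with orthosum s:
every enumeration of F yields the orthosum s. -/
def FinsetSumsTo {ι : Type v} (e : ι → E) (F : Finset ι) (s : E) : Prop :=
  ∀ l : List ι, l.Nodup →
    (letI : DecidableEq ι := Classical.decEq ι; l.toFinset) = F →
    A.ListSumsTo (l.map e) s

/-- A family is orthogonal iff every finite subfamily is orthogonal
(all enumerations have a common orthosum). -/
def IsOrthogonal {ι : Type v} (e : ι → E) : Prop :=
  ∀ F : Finset ι, ∃ s, A.FinsetSumsTo e F s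

/-- A family is orthosummable with orthosum s iff it is orthogonal and s is
the supremum of its finite partial orthosums. -/
def IsOrthosum {ι : Type v} (e : ι → E) (s : E) : Prop :=
  A.IsOrthogonal e ∧ A.IsSup {t | ∃ F : Finset ι, A.FinsetSumsTo e F t} s

/-- A family (eᵢ) is ΓEX-orthogonal iff there is a pairwise disjoint family
(πᵢ) in the exocenter with πᵢ eᵢ = eᵢ for all i. -/
def GEXOrthogonal {ι : Type v} (e : ι → E) : Prop :=
  ∃ π : ι → E → E, (∀ i, A.IsExo (π i)) ∧
    (∀ i j, i ≠ j → A.exoDisjoint (π i) (π j)) ∧ ∀ i, π i (e i) = e i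

/-- E is centrally orthocomplete: (CO1) every ΓEX-orthogonal family is
orthosummable, and (CO2) orthosums respect one-sided summability. -/
def IsCOGPEA : Prop :=
  (∀ {ι : Type u} (e : ι → E), A.GEXOrthogonal e → ∃ s, A.IsOrthosum e s) ∧
  (∀ {ι : Type u} (e : ι → E) (s : E), A.GEXOrthogonal e → A.IsOrthosum e s →
    ∀ a : E, ((∀ i, A.Defined a (e i)) → A.Defined a s) ∧
             ((∀ i, A.Defined (e i) a) → A.Defined s a))

/-- γ is the exocentral cover of e: the smallest element of ΓEX(E) fixing e. -/
def IsExoCover (e : E) (γ : E → E) : Prop :=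
  A.IsExo γ ∧ γ e = e ∧ ∀ π, A.IsExo π → π e = e → A.exoLe γ π

/-- The restriction of the partial algebra to a subset containing 0 (with the
operation defined whenever it is defined in E and the result lies in the subset). -/
def restrictSet (S : Set E) (h0 : A.zero ∈ S) : PartialAlg S where
  R a b s := A.R a.1 b.1 s.1
  zero := ⟨A.zero, h0⟩

/-- The axioms (PEA1)–(PEA4) of a pseudoeffect algebra with unit `one`
(including single-valuedness of the partial operation). -/
def IsPEA (one : E) : Prop :=
  (∀ a b c d : E, A.R a b c → A.R a b d → c = d) ∧
  -- (PEA1)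
  (∀ a b c ab abc : E, A.R a b ab → A.R ab c abc → ∃ bc, A.R b c bc ∧ A.R a bc abc) ∧
  (∀ a b c bc abc : E, A.R b c bc → A.R a bc abc → ∃ ab, A.R a b ab ∧ A.R ab c abc) ∧
  -- (PEA2)
  (∀ a : E, ∃! d, A.R a d one) ∧
  (∀ a : E, ∃! e, A.R e a one) ∧
  -- (PEA3)
  (∀ a b s : E, A.R a b s → (∃ d, A.R d a s) ∧ (∃ e, A.R b e s)) ∧
  -- (PEA4)
  (∀ a s : E, A.R one a s ∨ A.R a one s → a = A.zero)

end PartialAlg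

end GPEApaper

section AuxProofs

open GPEApaper PartialAlg

variable {E : Type u} {A : PartialAlg E}

/-! Basic order lemmas -/

theorem aux_le_trans (hA : A.IsGPEA) {a b c : E} (h1 : A.le a b) (h2 : A.le b c) :
    A.le a c := by
  obtain ⟨x, hx⟩ := h1
  obtain ⟨y, hy⟩ := h2
  obtain ⟨xy, -, h⟩ := hA.2.1 a x y b c hx hy
  exact ⟨xy, h⟩

theorem aux_le_antisymm (hA : A.IsGPEA) {a b : E} (h1 : A.le a b) (h2 : A.le b a) :
    a = b := by
  obtain ⟨x, hx⟩ := h1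
  obtain ⟨y, hy⟩ := h2
  obtain ⟨xy, hxy, h⟩ := hA.2.1 a x y b a hx hy
  have h0 := (hA.2.2.2.2.2.2.2 a).1
  have hxy0 : xy = A.zero := hA.2.2.2.2.1 a xy A.zero a h h0
  subst hxy0
  obtain ⟨hx0, -⟩ := hA.2.2.2.2.2.2.1 x y hxy
  subst hx0
  exact (hA.1 a A.zero b a hx h0).symm

/-! Basic exocenter lemmas -/

theorem exo_zero (hA : A.IsGPEA) {π : E → E} (hπ : A.IsExo π) :
    π A.zero = A.zero := by
  have h0 : A.R A.zero A.zero A.zero := (hA.2.2.2.2.2.2.2 A.zero).1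
  have h1 := hπ.1 _ _ _ h0
  exact hA.2.2.2.2.1 (π A.zero) (π A.zero) A.zero (π A.zero) h1
    (hA.2.2.2.2.2.2.2 (π A.zero)).1

theorem exo_le_zero (hA : A.IsGPEA) {π : E → E} (hπ : A.IsExo π) {a b : E}
    (h0 : π a = A.zero) (hle : A.le b a) : π b = A.zero := by
  obtain ⟨x, hx⟩ := hle
  have h := hπ.1 b x a hx
  rw [h0] at h
  exact (hA.2.2.2.2.2.2.1 _ _ h).1

/-- Lemma A: anything below a π-fixed element is π-fixed. -/
theorem exo_fix_le (hA : A.IsGPEA) {π : E → E} (hπ : A.IsExo π) {e f : E}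
    (hfix : π e = e) (hle : A.le f e) : π f = f := by
  obtain ⟨x, hx⟩ := hle
  have h1 : A.R (π f) (π x) e := by
    have := hπ.1 f x e hx; rwa [hfix] at this
  obtain ⟨u, hu⟩ := hπ.2.2.1 f
  obtain ⟨t, hux, hft⟩ := hA.2.1 (π f) u x f e hu hx
  have ht : t = π x := hA.2.2.2.2.1 (π f) t (π x) e hft h1
  subst ht
  obtain ⟨v, hv⟩ := hπ.2.2.1 x
  -- π u = 0
  have hπu : π u = A.zero := by
    have h2 := hπ.1 u x (π x) hux
    rw [hπ.2.1 x] at h2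
    exact hA.2.2.2.2.2.1 (π x) (π u) A.zero (π x) h2
      (hA.2.2.2.2.2.2.2 (π x)).2
  obtain ⟨s, hs1, hs2⟩ := hπ.2.2.2 (π x) u (hπ.2.1 x) hπu
  -- from R (πx) v x and R u x (πx): ∃ ab, R u (πx) ab ∧ R ab v (πx)
  obtain ⟨ab, hab1, hab2⟩ := hA.2.2.1 u (π x) v x (π x) hv hux
  have habs : ab = s := hA.1 u (π x) ab s hab1 hs2
  rw [habs] at hab2
  -- from R (πx) u s and R s v (πx): ∃ uv, R u v uv ∧ R (πx) uv (πx)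
  obtain ⟨uv, huv, hxuv⟩ := hA.2.1 (π x) u v s (π x) hs1 hab2
  have huv0 : uv = A.zero :=
    hA.2.2.2.2.1 (π x) uv A.zero (π x) hxuv (hA.2.2.2.2.2.2.2 (π x)).1
  subst huv0
  obtain ⟨hu0, -⟩ := hA.2.2.2.2.2.2.1 u v huv
  subst hu0
  exact (hA.1 (π f) A.zero f (π f) hu (hA.2.2.2.2.2.2.2 (π f)).1).symm

/-! Complement lemmas -/

theorem rdiv_eq (hA : A.IsGPEA) {a x b : E} (hx : A.R a x b) : A.rdiv a b = x := by
  haveI : Nonempty E := ⟨A.zero⟩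
  have hspec : A.R a (A.rdiv a b) b := by
    show A.R a (Classical.epsilon fun y => A.R a y b) b
    exact Classical.epsilon_spec (p := fun y => A.R a y b) ⟨x, hx⟩
  exact hA.2.2.2.2.1 a (A.rdiv a b) x b hspec hx

/-- C0: πe ⊕ π′e = e. -/
theorem compl_spec (hA : A.IsGPEA) {π : E → E} (hπ : A.IsExo π) (e : E) :
    A.R (π e) (A.exoCompl π e) e := by
  haveI : Nonempty E := ⟨A.zero⟩
  show A.R (π e) (Classical.epsilon fun y => A.R (π e) y e) e
  exact Classical.epsilon_spec (p := fun y => A.R (π e) y e) (hπ.2.2.1 e)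

/-- C1: π(π′e) = 0. -/
theorem compl_zero (hA : A.IsGPEA) {π : E → E} (hπ : A.IsExo π) (e : E) :
    π (A.exoCompl π e) = A.zero := by
  have h := hπ.1 _ _ _ (compl_spec hA hπ e)
  rw [hπ.2.1 e] at h
  exact hA.2.2.2.2.1 (π e) (π (A.exoCompl π e)) A.zero (π e) h
    (hA.2.2.2.2.2.2.2 (π e)).1

/-- C2: π′e ⊕ πe = e as well. -/
theorem compl_perp (hA : A.IsGPEA) {π : E → E} (hπ : A.IsExo π) (e : E) :
    A.R (A.exoCompl π e) (π e) e := by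
  obtain ⟨s, hs1, hs2⟩ := hπ.2.2.2 (π e) (A.exoCompl π e) (hπ.2.1 e)
    (compl_zero hA hπ e)
  have : s = e := hA.1 _ _ _ _ hs1 (compl_spec hA hπ e)
  rwa [this] at hs2

theorem compl_compl_apply (hA : A.IsGPEA) {π : E → E} (hπ : A.IsExo π) (a : E) :
    A.exoCompl (A.exoCompl π) a = π a :=
  rdiv_eq hA (compl_perp hA hπ a)

/-- The exocentral complement is in the exocenter. -/
theorem compl_exo (hA : A.IsGPEA) {π : E → E} (hπ : A.IsExo π) :
    A.IsExo (A.exoCompl π) := by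
  refine ⟨?_, ?_, ?_, ?_⟩
  · intro e f s hefs
    have hπs := hπ.1 e f s hefs
    have c0e := compl_spec hA hπ e
    have c0f := compl_spec hA hπ f
    have c0s := compl_spec hA hπ s
    obtain ⟨m, hm1, hm2⟩ := hπ.2.2.2 (π f) (A.exoCompl π e) (hπ.2.1 f)
      (compl_zero hA hπ e)
    obtain ⟨t, ht1, ht2⟩ := hA.2.1 (π e) (A.exoCompl π e) f e s c0e hefs
    obtain ⟨ab, hab1, hab2⟩ := hA.2.2.1 (A.exoCompl π e) (π f) (A.exoCompl π f) f t
      c0f ht1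
    have habm : ab = m := hA.1 _ _ _ _ hab1 hm2
    rw [habm] at hab2
    obtain ⟨u, hu1, hu2⟩ := hA.2.1 (π f) (A.exoCompl π e) (A.exoCompl π f) m t
      hm1 hab2
    obtain ⟨ab2, hab21, hab22⟩ := hA.2.2.1 (π e) (π f) u t s hu2 ht2
    have : ab2 = π s := hA.1 _ _ _ _ hab21 hπs
    subst this
    have : u = A.exoCompl π s := hA.2.2.2.2.1 (π s) u (A.exoCompl π s) s hab22 c0s
    rwa [this] at hu1
  · intro e
    show A.rdiv (π (A.exoCompl π e)) (A.exoCompl π e) = A.exoCompl π e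
    rw [compl_zero hA hπ e]
    exact rdiv_eq hA (hA.2.2.2.2.2.2.2 (A.exoCompl π e)).2
  · intro e
    exact ⟨π e, compl_perp hA hπ e⟩
  · intro e f he hf
    have hπe : π e = A.zero := by
      have := compl_spec hA hπ e
      rw [he] at this
      exact hA.2.2.2.2.2.1 e (π e) A.zero e this (hA.2.2.2.2.2.2.2 e).2
    have hπf : π f = f := by
      have := compl_spec hA hπ f
      rw [hf] at this
      exact (hA.1 (π f) A.zero f (π f) this (hA.2.2.2.2.2.2.2 (π f)).1).symm
    obtain ⟨s, hs1, hs2⟩ := hπ.2.2.2 f e hπf hπe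
    exact ⟨s, hs2, hs1⟩

/-- Commutativity of exocenter elements. -/
theorem exo_comm (hA : A.IsGPEA) {ξ π : E → E} (hξ : A.IsExo ξ) (hπ : A.IsExo π)
    (a : E) : ξ (π a) = π (ξ a) := by
  have c0 := compl_spec hA hξ a
  have h1 := hξ.1 _ _ _ (hπ.1 _ _ _ c0)
  have h2 : ξ (π (ξ a)) = π (ξ a) :=
    exo_fix_le hA hξ (hξ.2.1 a) (hπ.2.2.1 (ξ a))
  have h3 : ξ (π (A.exoCompl ξ a)) = A.zero :=
    exo_le_zero hA hξ (compl_zero hA hξ a) (hπ.2.2.1 (A.exoCompl ξ a))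
  rw [h2, h3] at h1
  exact hA.1 (π (ξ a)) A.zero (ξ (π a)) (π (ξ a)) h1
    (hA.2.2.2.2.2.2.2 (π (ξ a))).1

/-- Composition of exocenter elements is in the exocenter. -/
theorem comp_exo (hA : A.IsGPEA) {ξ π : E → E} (hξ : A.IsExo ξ) (hπ : A.IsExo π) :
    A.IsExo (ξ ∘ π) := by
  refine ⟨?_, ?_, ?_, ?_⟩
  · intro e f s h
    exact hξ.1 _ _ _ (hπ.1 _ _ _ h)
  · intro e
    show ξ (π (ξ (π e))) = ξ (π e)
    rw [exo_fix_le hA hπ (hπ.2.1 e) (hξ.2.2.1 (π e)), hξ.2.1]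
  · intro e
    exact aux_le_trans hA (hξ.2.2.1 (π e)) (hπ.2.2.1 e)
  · intro e f h1 h2
    replace h1 : ξ (π e) = e := h1
    replace h2 : ξ (π f) = A.zero := h2
    have hπe : π e = e := by
      have hle1 : A.le e (π e) := by
        have := hξ.2.2.1 (π e)
        rwa [h1] at this
      exact (aux_le_antisymm hA hle1 (hπ.2.2.1 e)).symm
    have hξe : ξ e = e := by rw [hπe] at h1; exact h1
    obtain ⟨t, ht1, ht2⟩ := hξ.2.2.2 e (π f) hξe h2
    have hπt : π t = t := by
      have := hπ.1 e (π f) t ht1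
      rw [hπe, hπ.2.1 f] at this
      exact hA.1 e (π f) (π t) t this ht1
    obtain ⟨w, hw1, hw2⟩ := hπ.2.2.2 t (A.exoCompl π f) hπt (compl_zero hA hπ f)
    obtain ⟨ab, hab1, hab2⟩ := hA.2.1 e (π f) (A.exoCompl π f) t w ht1 hw1
    have habf : ab = f := hA.1 _ _ _ _ hab1 (compl_spec hA hπ f)
    rw [habf] at hab2
    obtain ⟨ba, hba1, hba2⟩ := hA.2.2.1 (A.exoCompl π f) (π f) e t w ht2 hw2
    have hbaf : ba = f := hA.1 _ _ _ _ hba1 (compl_perp hA hπ f)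
    rw [hbaf] at hba2
    exact ⟨w, hab2, hba2⟩

/-! Order lemmas on the exocenter -/

theorem exo_le_of_comp_zero (hA : A.IsGPEA) {α β : E → E} (hα : A.IsExo α)
    (hβ : A.IsExo β) (h : ∀ a, α (A.exoCompl β a) = A.zero) : A.exoLe α β := by
  funext a
  show α a = α (β a)
  have h1 := hα.1 _ _ _ (compl_spec hA hβ a)
  rw [h a] at h1
  exact hA.1 (α (β a)) A.zero (α a) (α (β a)) h1
    (hA.2.2.2.2.2.2.2 (α (β a))).1

theorem exo_comp_zero_of_le (hA : A.IsGPEA) {α β : E → E} (hα : A.IsExo α)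
    (hβ : A.IsExo β) (h : A.exoLe α β) (a : E) :
    α (A.exoCompl β a) = A.zero := by
  have h1 := congrFun h (A.exoCompl β a)
  simp only [Function.comp] at h1
  rw [h1, compl_zero hA hβ a, exo_zero hA hα]

theorem exo_fix_of_le_fix (hA : A.IsGPEA) {π σ : E → E} (hπ : A.IsExo π)
    (hσ : A.IsExo σ) (hle : A.exoLe π σ) {x : E} (hfix : π x = x) : σ x = x := by
  have h1 := congrFun hle x
  simp only [Function.comp] at h1
  rw [hfix] at h1
  refine aux_le_antisymm hA (hσ.2.2.1 x) ?_
  have := hπ.2.2.1 (σ x)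
  rwa [← h1] at this

theorem exo_le_antisymm (hA : A.IsGPEA) {ξ π : E → E} (hξ : A.IsExo ξ)
    (hπ : A.IsExo π) (h1 : A.exoLe ξ π) (h2 : A.exoLe π ξ) : ξ = π := by
  have hc : ξ ∘ π = π ∘ ξ := funext fun a => exo_comm hA hξ hπ a
  rw [h1, hc, ← h2]

theorem cover_comp_le (hA : A.IsGPEA) {π β g : E → E} (hπ : A.IsExo π)
    (hβ : A.IsExo β) (hg : A.IsExo g) {f : E}
    (hgmin : ∀ δ, A.IsExo δ → δ f = f → A.exoLe g δ)
    (hβh : β (π f) = π f) : A.exoLe (π ∘ g) β := by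
  have hβ' := compl_exo hA hβ
  have hπ' := compl_exo hA hπ
  have hρ : A.IsExo (A.exoCompl β ∘ π) := comp_exo hA hβ' hπ
  have hσ : A.IsExo (A.exoCompl (A.exoCompl β ∘ π)) := compl_exo hA hρ
  have hcomp : A.IsExo (π ∘ g) := comp_exo hA hπ hg
  -- β ≤ σ
  have hβσ : A.exoLe β (A.exoCompl (A.exoCompl β ∘ π)) := by
    refine exo_le_of_comp_zero hA hβ hσ fun a => ?_
    rw [compl_compl_apply hA hρ a]
    exact compl_zero hA hβ (π a)
  -- π' ≤ σ
  have hπ'σ : A.exoLe (A.exoCompl π) (A.exoCompl (A.exoCompl β ∘ π)) := by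
    refine exo_le_of_comp_zero hA hπ' hσ fun a => ?_
    rw [compl_compl_apply hA hρ a]
    show A.exoCompl π (A.exoCompl β (π a)) = A.zero
    rw [exo_comm hA hπ' hβ' (π a)]
    have h0 : A.exoCompl π (π a) = A.zero := by
      rw [exo_comm hA hπ' hπ a]
      exact compl_zero hA hπ a
    rw [h0]
    exact exo_zero hA hβ'
  -- σ fixes f
  have hσf : A.exoCompl (A.exoCompl β ∘ π) f = f := by
    have hσh : A.exoCompl (A.exoCompl β ∘ π) (π f) = π f :=
      exo_fix_of_le_fix hA hβ hσ hβσ hβh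
    have hσπ'f : A.exoCompl (A.exoCompl β ∘ π) (A.exoCompl π f) = A.exoCompl π f :=
      exo_fix_of_le_fix hA hπ' hσ hπ'σ (hπ'.2.1 f)
    have h1 := hσ.1 _ _ _ (compl_spec hA hπ f)
    rw [hσh, hσπ'f] at h1
    exact hA.1 _ _ _ _ h1 (compl_spec hA hπ f)
  have hgσ : A.exoLe g (A.exoCompl (A.exoCompl β ∘ π)) := hgmin _ hσ hσf
  refine exo_le_of_comp_zero hA hcomp hβ fun a => ?_
  show π (g (A.exoCompl β a)) = A.zero
  have h1 := congrFun hgσ (A.exoCompl β a)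
  simp only [Function.comp] at h1
  rw [h1, exo_comm hA hπ hg (A.exoCompl (A.exoCompl β ∘ π) (A.exoCompl β a))]
  have h2 : π (A.exoCompl (A.exoCompl β ∘ π) (A.exoCompl β a)) = A.zero := by
    rw [exo_comm hA hπ hσ (A.exoCompl β a)]
    have h3 : π (A.exoCompl β a) = (A.exoCompl β ∘ π) a := exo_comm hA hπ hβ' a
    rw [h3, exo_comm hA hσ hρ a]
    exact compl_zero hA hρ a
  rw [h2]
  exact exo_zero hA hg

/-- Lemma B: γ(πf) = π ∘ γ_f for π in the exocenter. -/
theorem cover_comp (hA : A.IsGPEA) {γ : E → E → E}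
    (hγ : ∀ a : E, A.IsExoCover a (γ a)) {π : E → E} (hπ : A.IsExo π) (f : E) :
    γ (π f) = π ∘ γ f := by
  obtain ⟨hγf, hγff, hγfmin⟩ := hγ f
  obtain ⟨hβ, hβh, hβmin⟩ := hγ (π f)
  have hcomp : A.IsExo (π ∘ γ f) := comp_exo hA hπ hγf
  have hfixh : (π ∘ γ f) (π f) = π f := by
    show π (γ f (π f)) = π f
    rw [exo_fix_le hA hγf hγff (hπ.2.2.1 f), hπ.2.1]
  have hle1 : A.exoLe (γ (π f)) (π ∘ γ f) := hβmin _ hcomp hfixh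
  have hle2 : A.exoLe (π ∘ γ f) (γ (π f)) :=
    cover_comp_le hA hπ hβ hγf hγfmin hβh
  exact exo_le_antisymm hA hβ hcomp hle1 hle2

end AuxProofs

open GPEApaper PartialAlg in
/-- Theorem 6.3 (i)–(vi): properties of the exocentral cover system of a
COGPEA (meets in ΓEX(E) are compositions and the join is (π′ ∘ ξ′)′). -/
theorem stmt_16 {E : Type u} (A : PartialAlg E) (hA : A.IsGPEA)
    (hCO : A.IsCOGPEA) (γ : E → E → E)
    (hγ : ∀ a : E, A.IsExoCover a (γ a)) (e f : E) :
    -- (i) γ₀ = 0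
    (γ A.zero = fun _ => A.zero) ∧
    -- (ii) γ_e e = e
    (γ e e = e) ∧
    -- (iii) e ≤ f → γ_e ≤ γ_f
    (A.le e f → A.exoLe (γ e) (γ f)) ∧
    -- (iv) γ_{e ⊕ f} = γ_e ∨ γ_f
    (∀ s : E, A.R e f s → γ s = A.exoSup (γ e) (γ f)) ∧
    -- (v) γ_{γ_e f} = γ_e ∘ γ_f = γ_e ∧ γ_f
    (γ (γ e f) = γ e ∘ γ f) ∧
    -- (vi) γ_{(γ_e)′ f} = (γ_e)′ ∘ γ_f = (γ_e)′ ∧ γ_f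
    (γ (A.exoCompl (γ e) f) = A.exoCompl (γ e) ∘ γ f) := by
  have hγe := (hγ e).1
  have hγf := (hγ f).1
  refine ⟨?_, (hγ e).2.1, ?_, ?_, ?_, ?_⟩
  -- (i)
  · have hz : A.IsExo (fun _ : E => A.zero) := by
      refine ⟨?_, ?_, ?_, ?_⟩
      · intro e' f' s' _
        exact (hA.2.2.2.2.2.2.2 A.zero).1
      · intro e'; rfl
      · intro e'
        exact ⟨e', (hA.2.2.2.2.2.2.2 e').2⟩
      · intro e' f' he' _
        refine ⟨f', ?_, ?_⟩
        · rw [← he']; exact (hA.2.2.2.2.2.2.2 f').2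
        · rw [← he']; exact (hA.2.2.2.2.2.2.2 f').1
    have hle : A.exoLe (γ A.zero) (fun _ : E => A.zero) :=
      (hγ A.zero).2.2 _ hz rfl
    funext a
    have h1 := congrFun hle a
    simp only [Function.comp] at h1
    rw [h1]
    exact exo_zero hA (hγ A.zero).1
  -- (iii)
  · intro hef
    exact (hγ e).2.2 (γ f) hγf (exo_fix_le hA hγf (hγ f).2.1 hef)
  -- (iv)
  · intro s hs
    obtain ⟨hγs, hγss, hγsmin⟩ := hγ s
    have hγe' := compl_exo hA hγe
    have hγf' := compl_exo hA hγf
    have hρ : A.IsExo (A.exoCompl (γ e) ∘ A.exoCompl (γ f)) := comp_exo hA hγe' hγf'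
    have hσ : A.IsExo (A.exoSup (γ e) (γ f)) := compl_exo hA hρ
    -- γ e ≤ σ
    have h1 : A.exoLe (γ e) (A.exoSup (γ e) (γ f)) := by
      refine exo_le_of_comp_zero hA hγe hσ fun a => ?_
      rw [show A.exoCompl (A.exoSup (γ e) (γ f)) a
            = (A.exoCompl (γ e) ∘ A.exoCompl (γ f)) a from compl_compl_apply hA hρ a]
      exact compl_zero hA hγe (A.exoCompl (γ f) a)
    have h2 : A.exoLe (γ f) (A.exoSup (γ e) (γ f)) := by
      refine exo_le_of_comp_zero hA hγf hσ fun a => ?_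
      rw [show A.exoCompl (A.exoSup (γ e) (γ f)) a
            = (A.exoCompl (γ e) ∘ A.exoCompl (γ f)) a from compl_compl_apply hA hρ a]
      show γ f (A.exoCompl (γ e) (A.exoCompl (γ f) a)) = A.zero
      rw [exo_comm hA hγf hγe' (A.exoCompl (γ f) a), compl_zero hA hγf a,
        exo_zero hA hγe']
    -- σ fixes s
    have hσs : A.exoSup (γ e) (γ f) s = s := by
      have hσe : A.exoSup (γ e) (γ f) e = e :=
        exo_fix_of_le_fix hA hγe hσ h1 (hγ e).2.1
      have hσf : A.exoSup (γ e) (γ f) f = f :=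
        exo_fix_of_le_fix hA hγf hσ h2 (hγ f).2.1
      have h := hσ.1 e f s hs
      rw [hσe, hσf] at h
      exact hA.1 e f _ _ h hs
    have hle1 : A.exoLe (γ s) (A.exoSup (γ e) (γ f)) := hγsmin _ hσ hσs
    -- σ ≤ γ s
    have hes : A.le e s := ⟨f, hs⟩
    have hfs : A.le f s := (hA.2.2.2.1 e f s hs).2
    have hγeγs : A.exoLe (γ e) (γ s) :=
      (hγ e).2.2 (γ s) hγs (exo_fix_le hA hγs hγss hes)
    have hγfγs : A.exoLe (γ f) (γ s) :=
      (hγ f).2.2 (γ s) hγs (exo_fix_le hA hγs hγss hfs)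
    have hγs' := compl_exo hA hγs
    -- γs′ ≤ γe′ and γs′ ≤ γf′
    have hc1 : A.exoLe (A.exoCompl (γ s)) (A.exoCompl (γ e)) := by
      refine exo_le_of_comp_zero hA hγs' hγe' fun a => ?_
      rw [show A.exoCompl (A.exoCompl (γ e)) a = γ e a from compl_compl_apply hA hγe a]
      rw [exo_comm hA hγs' hγe a]
      exact exo_comp_zero_of_le hA hγe hγs hγeγs a
    have hc2 : A.exoLe (A.exoCompl (γ s)) (A.exoCompl (γ f)) := by
      refine exo_le_of_comp_zero hA hγs' hγf' fun a => ?_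
      rw [show A.exoCompl (A.exoCompl (γ f)) a = γ f a from compl_compl_apply hA hγf a]
      rw [exo_comm hA hγs' hγf a]
      exact exo_comp_zero_of_le hA hγf hγs hγfγs a
    -- γs′ ≤ ρ
    have hc3 : A.exoLe (A.exoCompl (γ s)) (A.exoCompl (γ e) ∘ A.exoCompl (γ f)) := by
      funext a
      show A.exoCompl (γ s) a = A.exoCompl (γ s) (A.exoCompl (γ e) (A.exoCompl (γ f) a))
      have e1 := congrFun hc1 (A.exoCompl (γ f) a)
      have e2 := congrFun hc2 a
      simp only [Function.comp] at e1 e2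
      rw [← e1, ← e2]
    have hle2 : A.exoLe (A.exoSup (γ e) (γ f)) (γ s) := by
      refine exo_le_of_comp_zero hA hσ hγs fun a => ?_
      rw [exo_comm hA hσ hγs' a]
      exact exo_comp_zero_of_le hA hγs' hρ hc3 a
    exact exo_le_antisymm hA hγs hσ hle1 hle2
  -- (v)
  · exact cover_comp hA hγ hγe f
  -- (vi)
  · exact cover_comp hA hγ (compl_exo hA hγe) f
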